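/- arXiv:0811.3077 — 3 statements merged into one kernel-verified Lean document; each statement's English description precedes it below -/
import Mathlib

section
/- Suppose H = H_ref + R + R† with [R, M] = R and [H_ref, M] = 0. Let Φ be a vector with M Φ = μ Φ, R R† Φ = ξ Φ, (R†)² Φ = 0, R Φ = 0, H_ref Φ = (μ + k) Φ, and H_ref (R† Φ) = (μ + α + k + Δk) (R† Φ) for scalars μ, ξ, k, Δk, α ∈ ℂ. If h ∈ ℂ satisfies ξ h² - (α + Δk) h - 1 = 0, then Ψ = Φ + h (R† Φ) satisfies H Ψ = (μ + k + h ξ) Ψ. -/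
-- `hquad` is what matching the `y`-coefficients of the two sides asks for.
theorem LinearMap.apply_add_smul_eq_smul_of_quadratic {R M : Type*} [CommRing R]
    [AddCommGroup M] [Module R M] (T : M →ₗ[R] M) {x y : M} {a c d h : R}
    (hx : T x = a • x + y) (hy : T y = c • x + d • y)
    (hquad : c * h ^ 2 + (a - d) * h - 1 = 0) :
    T (x + h • y) = (a + h * c) • (x + h • y) := by
  rw [map_add, map_smul, hx, hy]
  match_scalars
  · ring
  · linear_combination -hquad

theorem doublet_construction_general
    {V : Type*} [NormedAddCommGroup V] [InnerProductSpace ℂ V] [FiniteDimensional ℂ V]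
    (H Href R : V →ₗ[ℂ] V)
    (hH : H = Href + R + LinearMap.adjoint R)
    (Φ : V)
    (μ ξ k Δk α h : ℂ)
    (hRRd : (R * LinearMap.adjoint R) Φ = ξ • Φ)
    (hRd2 : (LinearMap.adjoint R * LinearMap.adjoint R) Φ = 0)
    (hRΦ : R Φ = 0)
    (hHrefΦ : Href Φ = (μ + k) • Φ)
    (hHrefRdΦ : Href (LinearMap.adjoint R Φ) = (μ + α + k + Δk) • (LinearMap.adjoint R Φ))
    (hquad : ξ * h ^ 2 - (α + Δk) * h - 1 = 0) :
    H (Φ + h • LinearMap.adjoint R Φ)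
      = (μ + k + h * ξ) • (Φ + h • LinearMap.adjoint R Φ) := by
  set Rd := LinearMap.adjoint R
  have hHΦ : H Φ = (μ + k) • Φ + Rd Φ := by
    simp only [hH, LinearMap.add_apply, hHrefΦ, hRΦ, add_zero]
  have hHRdΦ : H (Rd Φ) = ξ • Φ + (μ + α + k + Δk) • Rd Φ := by
    rw [hH, LinearMap.add_apply, LinearMap.add_apply, hHrefRdΦ]
    rw [← Module.End.mul_apply, hRRd, ← Module.End.mul_apply, hRd2, add_zero, add_comm]
  exact H.apply_add_smul_eq_smul_of_quadratic hHΦ hHRdΦ (by linear_combination hquad)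

theorem doublet_construction
    {V : Type*} [NormedAddCommGroup V] [InnerProductSpace ℂ V] [FiniteDimensional ℂ V]
    (H Href M R : V →ₗ[ℂ] V)
    (hH : H = Href + R + LinearMap.adjoint R)
    (hRM : R * M - M * R = R)
    (hHref : Href * M = M * Href)
    (Φ : V) (hΦ : Φ ≠ 0)
    (μ ξ k Δk α h : ℂ)
    (hMΦ : M Φ = μ • Φ)
    (hRRd : (R * LinearMap.adjoint R) Φ = ξ • Φ)
    (hRd2 : (LinearMap.adjoint R * LinearMap.adjoint R) Φ = 0)
    (hRΦ : R Φ = 0)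
    (hHrefΦ : Href Φ = (μ + k) • Φ)
    (hHrefRdΦ : Href (LinearMap.adjoint R Φ) = (μ + α + k + Δk) • (LinearMap.adjoint R Φ))
    (hquad : ξ * h ^ 2 - (α + Δk) * h - 1 = 0) :
    H (Φ + h • LinearMap.adjoint R Φ)
      = (μ + k + h * ξ) • (Φ + h • LinearMap.adjoint R Φ) :=
  doublet_construction_general H Href R hH Φ μ ξ k Δk α h hRRd hRd2 hRΦ hHrefΦ hHrefRdΦ hquad
end

section
/- Let H = H_ref + R + R† where H_ref = α M on the relevant subspace, [R,M] = R, M self-adjoint. Suppose Ψ = ψ₁ + ψ₂ with M ψ₁ = ν ψ₁, M ψ₂ = (ν+1) ψ₂, R ψ₁ = 0, R† ψ₂ = 0, (H_ref − αM)ψ₁ = 0, (H_ref − αM)ψ₂ = 0, and H Ψ = μ Ψ. If z ∈ ℂ satisfies e^z = −(να − μ)/(να − μ + α) (assuming να − μ + α ≠ 0), then Φ = e^{−z ν} ψ₁ + e^{−z(ν+1)} ψ₂ is also an eigenvector of H, with eigenvalue μ' = να + (να + α − μ). -/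
/-!
Both `ψ₁ + ψ₂` and `Φ` lie in `span {ψ₁, ψ₂}`, which `H` preserves. Since `R` lowers and `R†`
raises the `M`-eigenvalue by one, `R ψ₂` lies in the `ν`-eigenspace and `R† ψ₁` in the
`(ν + 1)`-eigenspace; comparing components of `H (ψ₁ + ψ₂) = μ (ψ₁ + ψ₂)` gives
`R ψ₂ = (μ - αν) ψ₁` and `R† ψ₁ = (μ - α(ν + 1)) ψ₂`. So `H` acts on the span by the matrix
`[[αν, μ - αν], [μ - α(ν + 1), α(ν + 1)]]`, whose eigenvalues are `μ` and its trace minus `μ`;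
the choice of `z` makes `(e^{-zν}, e^{-z(ν+1)})` an eigenvector for the second one.
-/

section Ladder

variable {K W : Type*} [CommRing K] [AddCommGroup W] [Module K W] {M A : W →ₗ[K] W}
  {x : W} {c : K}

theorem apply_lowering_of_apply_eq_smul (hA : A * M - M * A = A) (hx : M x = (c + 1) • x) :
    M (A x) = c • A x := by
  have h := congrArg (· x) hA
  simp only [LinearMap.sub_apply, Module.End.mul_apply, hx, map_smul] at h
  linear_combination (norm := module) -h

theorem apply_raising_of_apply_eq_smul (hA : M * A - A * M = A) (hx : M x = c • x) :
    M (A x) = (c + 1) • A x := by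
  have h := congrArg (· x) hA
  simp only [LinearMap.sub_apply, Module.End.mul_apply, hx, map_smul] at h
  linear_combination (norm := module) h

theorem eq_and_eq_of_add_eq_add_of_apply_eq_smul {x₁ x₂ y₁ y₂ : W}
    (hx₁ : M x₁ = c • x₁) (hy₁ : M y₁ = c • y₁)
    (hx₂ : M x₂ = (c + 1) • x₂) (hy₂ : M y₂ = (c + 1) • y₂) (h : x₁ + x₂ = y₁ + y₂) :
    x₁ = y₁ ∧ x₂ = y₂ := by
  have hM := congrArg M h
  simp only [map_add, hx₁, hy₁, hx₂, hy₂] at hM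
  have h₂ : x₂ = y₂ := by linear_combination (norm := module) hM - c • h
  exact ⟨by linear_combination (norm := module) h - h₂, h₂⟩

end Ladder

theorem LinearMap.mul_adjoint_sub_adjoint_mul_eq_adjoint {𝕜 E : Type*} [RCLike 𝕜]
    [NormedAddCommGroup E] [InnerProductSpace 𝕜 E] [FiniteDimensional 𝕜 E] {M R : E →ₗ[𝕜] E}
    (hM : LinearMap.adjoint M = M) (hR : R * M - M * R = R) :
    M * LinearMap.adjoint R - LinearMap.adjoint R * M = LinearMap.adjoint R := by
  have h := congrArg star hR
  rw [star_sub, star_mul, star_mul] at h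
  simpa only [LinearMap.star_eq_adjoint, hM] using h

theorem partner_eigenvector_via_exp_general
    {V : Type*} [NormedAddCommGroup V] [InnerProductSpace ℂ V] [FiniteDimensional ℂ V]
    (H Href M R : V →ₗ[ℂ] V)
    (hH : H = Href + R + LinearMap.adjoint R)
    (hRM : R * M - M * R = R)
    (hMsa : LinearMap.adjoint M = M)
    (ψ₁ ψ₂ : V)
    (ν α μ : ℂ) (z : ℂ)
    (hM1 : M ψ₁ = ν • ψ₁)
    (hM2 : M ψ₂ = (ν + 1) • ψ₂)
    (hR1 : R ψ₁ = 0)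
    (hR2 : LinearMap.adjoint R ψ₂ = 0)
    (hHref1 : Href ψ₁ - α • M ψ₁ = 0)
    (hHref2 : Href ψ₂ - α • M ψ₂ = 0)
    (hEig : H (ψ₁ + ψ₂) = μ • (ψ₁ + ψ₂))
    (hden : ν * α - μ + α ≠ 0)
    (hz : Complex.exp z = -(ν * α - μ) / (ν * α - μ + α)) :
    H (Complex.exp (-z * ν) • ψ₁ + Complex.exp (-z * (ν + 1)) • ψ₂)
      = (ν * α + (ν * α + α - μ)) •
        (Complex.exp (-z * ν) • ψ₁ + Complex.exp (-z * (ν + 1)) • ψ₂) := by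
  have hH1 : H ψ₁ = (α * ν) • ψ₁ + LinearMap.adjoint R ψ₁ := by
    simp [hH, sub_eq_zero.mp hHref1, hM1, hR1, smul_smul]
  have hH2 : H ψ₂ = (α * (ν + 1)) • ψ₂ + R ψ₂ := by
    simp [hH, sub_eq_zero.mp hHref2, hM2, hR2, smul_smul]
  have hsum : R ψ₂ + LinearMap.adjoint R ψ₁ = (μ - α * ν) • ψ₁ + (μ - α * (ν + 1)) • ψ₂ := by
    rw [map_add, hH1, hH2] at hEig
    linear_combination (norm := module) hEig
  have hRadj := LinearMap.mul_adjoint_sub_adjoint_mul_eq_adjoint hMsa hRM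
  obtain ⟨hRψ₂, hRadjψ₁⟩ := eq_and_eq_of_add_eq_add_of_apply_eq_smul
    (apply_lowering_of_apply_eq_smul hRM hM2) (by simp [hM1, smul_smul, mul_comm])
    (apply_raising_of_apply_eq_smul hRadj hM1)
    (by simp [hM2, smul_smul, mul_comm]) hsum
  have hexp : Complex.exp (-z * ν) = Complex.exp (-z * (ν + 1)) * Complex.exp z := by
    rw [← Complex.exp_add]; ring_nf
  have hzE : Complex.exp z * (ν * α - μ + α) = μ - ν * α := by
    rw [hz]; field_simp; ring
  rw [map_add, map_smul, map_smul, hH1, hH2, hRψ₂, hRadjψ₁, hexp]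
  match_scalars <;> linear_combination (-(Complex.exp (-z * (ν + 1)))) * hzE

theorem partner_eigenvector_via_exp
    {V : Type*} [NormedAddCommGroup V] [InnerProductSpace ℂ V] [FiniteDimensional ℂ V]
    (H Href M R : V →ₗ[ℂ] V)
    (hH : H = Href + R + LinearMap.adjoint R)
    (hRM : R * M - M * R = R)
    (hMsa : LinearMap.adjoint M = M)
    (ψ₁ ψ₂ : V) (hne : ¬(ψ₁ = 0 ∧ ψ₂ = 0))
    (ν α μ : ℂ) (z : ℂ)
    (hM1 : M ψ₁ = ν • ψ₁)
    (hM2 : M ψ₂ = (ν + 1) • ψ₂)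
    (hR1 : R ψ₁ = 0)
    (hR2 : LinearMap.adjoint R ψ₂ = 0)
    (hHref1 : Href ψ₁ - α • M ψ₁ = 0)
    (hHref2 : Href ψ₂ - α • M ψ₂ = 0)
    (hEig : H (ψ₁ + ψ₂) = μ • (ψ₁ + ψ₂))
    (hden : ν * α - μ + α ≠ 0)
    (hz : Complex.exp z = -(ν * α - μ) / (ν * α - μ + α)) :
    H (Complex.exp (-z * ν) • ψ₁ + Complex.exp (-z * (ν + 1)) • ψ₂)
      = (ν * α + (ν * α + α - μ)) •
        (Complex.exp (-z * ν) • ψ₁ + Complex.exp (-z * (ν + 1)) • ψ₂) :=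
  partner_eigenvector_via_exp_general H Href M R hH hRM hMsa ψ₁ ψ₂ ν α μ z hM1 hM2 hR1 hR2 hHref1
    hHref2 hEig hden hz
end

section
/- The three eigenvalues of the ⟨1,2,2⟩ triplet of the 4-site half-filled Hubbard ring are the roots of the cubic ε³ − 2α ε² + (α² − 16) ε + 12α = 0 (equivalently, a real cubic with root-sum 2α); for every real α this cubic has three distinct real roots, hence no crossing occurs within the triplet. -/
/-!
Substituting ε = α + t turns the cubic into t (t² - 16) + α (t² - 4). This equals 24 at t = -2
and -24 at t = 2, while at t = ±(|α| + 5) the term t (t² - 16) dominates, so the cubic changes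
sign three times and the intermediate value theorem yields three distinct real roots.
-/

theorem exists_three_zeros_of_alternating_signs {f : ℝ → ℝ} (hf : Continuous f) {a b c d : ℝ}
    (hab : a < b) (hbc : b < c) (hcd : c < d)
    (ha : f a < 0) (hb : 0 < f b) (hc : f c < 0) (hd : 0 < f d) :
    ∃ x y z, x < y ∧ y < z ∧ f x = 0 ∧ f y = 0 ∧ f z = 0 := by
  obtain ⟨x, hx, hfx⟩ := intermediate_value_Ioo hab.le hf.continuousOn ⟨ha, hb⟩
  obtain ⟨y, hy, hfy⟩ := intermediate_value_Ioo' hbc.le hf.continuousOn ⟨hc, hb⟩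
  obtain ⟨z, hz, hfz⟩ := intermediate_value_Ioo hcd.le hf.continuousOn ⟨hc, hd⟩
  exact ⟨x, y, z, hx.2.trans hy.1, hy.2.trans hz.1, hfx, hfy, hfz⟩

def tripletCubic (α ε : ℝ) : ℝ := ε ^ 3 - 2 * α * ε ^ 2 + (α ^ 2 - 16) * ε + 12 * α

theorem continuous_tripletCubic (α : ℝ) : Continuous (tripletCubic α) := by
  unfold tripletCubic
  fun_prop

theorem tripletCubic_add (α t : ℝ) :
    tripletCubic α (α + t) = t * (t ^ 2 - 16) + α * (t ^ 2 - 4) := by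
  unfold tripletCubic
  ring

theorem tripletCubic_sub_two (α : ℝ) : tripletCubic α (α - 2) = 24 := by
  rw [sub_eq_add_neg, tripletCubic_add]
  norm_num

theorem tripletCubic_add_two (α : ℝ) : tripletCubic α (α + 2) = -24 := by
  rw [tripletCubic_add]
  norm_num

theorem mul_sq_sub_four_lt {s : ℝ} (hs : 0 ≤ s) :
    s * ((s + 5) ^ 2 - 4) < (s + 5) * ((s + 5) ^ 2 - 16) := by
  nlinarith

theorem tripletCubic_add_abs_add_five_pos (α : ℝ) : 0 < tripletCubic α (α + (|α| + 5)) := by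
  have hdom := mul_sq_sub_four_lt (abs_nonneg α)
  have hsq : 0 < (|α| + 5) ^ 2 - 4 := by nlinarith [abs_nonneg α]
  rw [tripletCubic_add]
  nlinarith [neg_abs_le α]

theorem tripletCubic_sub_abs_add_five_neg (α : ℝ) : tripletCubic α (α - (|α| + 5)) < 0 := by
  have hdom := mul_sq_sub_four_lt (abs_nonneg α)
  have hsq : 0 < (|α| + 5) ^ 2 - 4 := by nlinarith [abs_nonneg α]
  rw [sub_eq_add_neg, tripletCubic_add]
  nlinarith [le_abs_self α]

theorem triplet_cubic_three_distinct_real_roots (α : ℝ) :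
    ∃ x y z : ℝ, x ≠ y ∧ y ≠ z ∧ x ≠ z ∧
      x ^ 3 - 2 * α * x ^ 2 + (α ^ 2 - 16) * x + 12 * α = 0 ∧
      y ^ 3 - 2 * α * y ^ 2 + (α ^ 2 - 16) * y + 12 * α = 0 ∧
      z ^ 3 - 2 * α * z ^ 2 + (α ^ 2 - 16) * z + 12 * α = 0 := by
  have hT : (2 : ℝ) < |α| + 5 := by linarith [abs_nonneg α]
  obtain ⟨x, y, z, hxy, hyz, hx, hy, hz⟩ :=
    exists_three_zeros_of_alternating_signs (continuous_tripletCubic α)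
      (by linarith : α - (|α| + 5) < α - 2) (by linarith : α - 2 < α + 2)
      (by linarith : α + 2 < α + (|α| + 5))
      (tripletCubic_sub_abs_add_five_neg α) (by rw [tripletCubic_sub_two]; norm_num)
      (by rw [tripletCubic_add_two]; norm_num) (tripletCubic_add_abs_add_five_pos α)
  exact ⟨x, y, z, hxy.ne, hyz.ne, (hxy.trans hyz).ne, hx, hy, hz⟩
end
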